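/- Let g, h : (0,4) → ℂ be continuous, with g(q) → h₀ and h(q) → h₀ as q → 4⁻, and suppose for every q < 4 we have two linear relations: a(σ(q)) = 0 and a(1) = 0, where a : [σ(q),1] → ℂ is differentiable in the exponent parameter η of F_{q,η}(e) = E[e^{iηW}1_{e∈γ}]. If σ(q) → 1 as q → 4, then the derivative relation at η = 1 holds: G(NW) - G(SE) = i(G(NE) - G(SW)), where G(e) = E[W·e^{iW}1_{e∈γ}]. -/

import Mathlib

open Filter Set Topology

/-!
Rolle's theorem fails for complex-valued functions, so apply it to `η ↦ φ (Φ q η)` for each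
real continuous linear functional `φ`: this gives a point `ξ q ∈ (σ q, 1)` where `φ (Φ' q ·)`
vanishes. As `q → 4⁻` the points `ξ q` are squeezed to `1`, so `φ` kills the limit of
`Φ' q (ξ q)`, which is the defect of `G`; functionals separate points, so the defect itself
vanishes.
-/

section RolleLimit

variable {E : Type*} [NormedAddCommGroup E] [NormedSpace ℝ E]

theorem exists_clm_hasDerivAt_eq_zero {f f' : ℝ → E} {a b : ℝ} (hab : a < b)
    (hf : ∀ x ∈ Icc a b, HasDerivAt f (f' x) x) (hfab : f a = f b) (φ : StrongDual ℝ E) :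
    ∃ c ∈ Ioo a b, φ (f' c) = 0 :=
  exists_hasDerivAt_eq_zero hab
    (fun x hx => (φ.continuous.continuousAt.comp (hf x hx).continuousAt).continuousWithinAt)
    (congrArg φ hfab) fun x hx => φ.hasFDerivAt.comp_hasDerivAt x (hf x (Ioo_subset_Icc_self hx))

theorem eq_zero_of_tendsto_deriv_of_eq {ι : Type*} {l : Filter ι} [l.NeBot] {Φ Φ' : ι → ℝ → E}
    {a b : ι → ℝ} {x₀ : ℝ} {L : E} (ha : Tendsto a l (𝓝 x₀)) (hb : Tendsto b l (𝓝 x₀))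
    (hab : ∀ᶠ i in l, a i < b i)
    (hderiv : ∀ᶠ i in l, ∀ x ∈ Icc (a i) (b i), HasDerivAt (Φ i) (Φ' i x) x)
    (heq : ∀ᶠ i in l, Φ i (a i) = Φ i (b i))
    (hlim : Tendsto (fun p : ι × ℝ => Φ' p.1 p.2) (l ×ˢ 𝓝 x₀) (𝓝 L)) : L = 0 := by
  refine SeparatingDual.eq_zero_of_forall_dual_eq_zero (R := ℝ) fun φ => ?_
  have hrolle : ∀ᶠ i in l, ∃ c, c ∈ Ioo (a i) (b i) ∧ φ (Φ' i c) = 0 := by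
    filter_upwards [hab, hderiv, heq] with i hi hdi hei
    exact exists_clm_hasDerivAt_eq_zero hi hdi hei φ
  obtain ⟨ξ, hξ⟩ := hrolle.choice
  have hξ_tendsto : Tendsto ξ l (𝓝 x₀) :=
    tendsto_of_tendsto_of_tendsto_of_le_of_le' ha hb (hξ.mono fun _ h => h.1.1.le)
      (hξ.mono fun _ h => h.1.2.le)
  have hφL : Tendsto (fun i => φ (Φ' i (ξ i))) l (𝓝 (φ L)) :=
    (φ.continuous.tendsto L).comp (hlim.comp (tendsto_id.prodMk hξ_tendsto))
  exact tendsto_nhds_unique hφL (tendsto_const_nhds.congr' (hξ.mono fun _ h => h.2.symm))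

end RolleLimit

/-- Rolle-type argument for `q = 4`: let `Φ q η` denote the local defect
`F_{q,η}(NW) - F_{q,η}(SE) - i(F_{q,η}(NE) - F_{q,η}(SW))`. If `Φ q · ` vanishes at
`η = σ(q)` and `η = 1` for every `q ∈ (0,4)`, `σ(q) → 1` as `q → 4⁻`, and the
`η`-derivative `Φ' q η` converges to `G(NW) - G(SE) - i(G(NE) - G(SW))` as
`(q,η) → (4,1)` with `q < 4`, then `G(NW) - G(SE) = i(G(NE) - G(SW))`. -/
theorem rolle_q_four (Φ Φ' : ℝ → ℝ → ℂ) (σ : ℝ → ℝ) (GNW GSE GNE GSW : ℂ)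
    (hderiv : ∀ q ∈ Set.Ioo (0:ℝ) 4, ∀ η : ℝ, HasDerivAt (Φ q) (Φ' q η) η)
    (hzeroσ : ∀ q ∈ Set.Ioo (0:ℝ) 4, Φ q (σ q) = 0)
    (hzero1 : ∀ q ∈ Set.Ioo (0:ℝ) 4, Φ q 1 = 0)
    (hσlt : ∀ q ∈ Set.Ioo (0:ℝ) 4, σ q < 1)
    (hσ : Tendsto σ (nhdsWithin 4 (Set.Iio 4)) (nhds 1))
    (hlim : Tendsto (fun p : ℝ × ℝ => Φ' p.1 p.2)
      (nhdsWithin (4, 1) (Set.Iio 4 ×ˢ Set.univ))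
      (nhds ((GNW - GSE) - Complex.I * (GNE - GSW)))) :
    GNW - GSE = Complex.I * (GNE - GSW) := by
  have hq : ∀ᶠ q in 𝓝[<] (4 : ℝ), q ∈ Ioo (0 : ℝ) 4 := Ioo_mem_nhdsLT (by norm_num)
  rw [nhdsWithin_prod_eq, nhdsWithin_univ] at hlim
  refine sub_eq_zero.mp (eq_zero_of_tendsto_deriv_of_eq hσ tendsto_const_nhds
    (hq.mono hσlt) (hq.mono fun q hq η _ => hderiv q hq η) (hq.mono fun q hq => ?_) hlim)
  rw [hzeroσ q hq, hzero1 q hq]
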